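/- Let κ be a cardinal of uncountable cofinality. Then every locally countable partial order of cardinality κ⁺ has order dimension at most κ. -/

import Mathlib

open Cardinal

universe u

/-- `L` is a realizer of the partial order on `P`: a family of linear orders
whose intersection is exactly `≤`. -/
def IsRealizer (P : Type u) [PartialOrder P] {ι : Type u} (L : ι → P → P → Prop) : Prop :=
  (∀ i, IsLinearOrder P (L i)) ∧ ∀ x y : P, x ≤ y ↔ ∀ i, L i x y

/-- The order dimension of a partial order: the least cardinality of a realizer. -/
noncomputable def orderDim (P : Type u) [PartialOrder P] : Cardinal.{u} :=
  sInf { c | ∃ (ι : Type u) (L : ι → P → P → Prop), #ι = c ∧ IsRealizer P L }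

/-!
Let θ = cf κ. Diagonalizing along a well-order of type κ⁺ yields κ⁺ functions θ → κ whose graphs
pairwise meet in fewer than θ points. Sending each x ∈ P to one of these graphs gives sets
`I x ⊆ θ × κ` such that, θ being regular and uncountable, `I x` is not covered by the countably many
`I z` with `z ≤ y` whenever `x ≰ y`. For a fixed `i ∈ θ × κ`, the pairs `(x, y)` with `i ∈ I x` and
`i ∉ I z` for all `z ≤ y` are such that no two of them `(x, y)`, `(x', y')` have `x ≤ y'`, so one
linear extension reverses all of them; these κ linear extensions realize P.
-/

open Ordinal Set

section Realizer

variable {P : Type u} [PartialOrder P]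

theorem exists_linearExtension_reversing {S : Set (P × P)}
    (hS : ∀ p ∈ S, ∀ q ∈ S, ¬ p.1 ≤ q.2) :
    ∃ L : P → P → Prop, IsLinearOrder P L ∧ (∀ x y : P, x ≤ y → L x y) ∧
      ∀ p ∈ S, ¬ L p.1 p.2 := by
  -- A chain of `≤`-steps and reversed pairs can pass through at most one reversed pair.
  let R : P → P → Prop := fun x y => x ≤ y ∨ ∃ p ∈ S, x ≤ p.2 ∧ p.1 ≤ y
  have : IsPartialOrder P R :=
    { refl := fun x => .inl le_rfl
      trans := by
        rintro x y z (hxy | ⟨p, hp, hxp, hpy⟩) (hyz | ⟨q, hq, hyq, hqz⟩)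
        · exact .inl (hxy.trans hyz)
        · exact .inr ⟨q, hq, hxy.trans hyq, hqz⟩
        · exact .inr ⟨p, hp, hxp, hpy.trans hyz⟩
        · exact absurd (hpy.trans hyq) (hS p hp q hq)
      antisymm := by
        rintro x y (hxy | ⟨p, hp, hxp, hpy⟩) (hyx | ⟨q, hq, hyq, hqx⟩)
        · exact le_antisymm hxy hyx
        · exact absurd (hqx.trans (hxy.trans hyq)) (hS q hq q hq)
        · exact absurd (hpy.trans (hyx.trans hxp)) (hS p hp p hp)
        · exact absurd (hpy.trans hyq) (hS p hp q hq) }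
  obtain ⟨L, hL, hRL⟩ := extend_partialOrder R
  refine ⟨L, hL, fun x y hxy => hRL _ _ (.inl hxy), fun p hp hLp => hS p hp p hp ?_⟩
  have hLp' : L p.2 p.1 := hRL _ _ (.inr ⟨p, hp, le_rfl, le_rfl⟩)
  exact (hL.antisymm _ _ hLp hLp').le

theorem exists_isRealizer_of_separating {ι : Type u} (I : P → Set ι)
    (hI : ∀ x y : P, ¬ x ≤ y → ∃ i ∈ I x, ∀ z ≤ y, i ∉ I z) :
    ∃ L : ι → P → P → Prop, IsRealizer P L := by
  let S : ι → Set (P × P) := fun i => {p | i ∈ I p.1 ∧ ∀ z ≤ p.2, i ∉ I z}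
  have hS : ∀ i, ∀ p ∈ S i, ∀ q ∈ S i, ¬ p.1 ≤ q.2 := fun i p hp q hq hpq => hq.2 _ hpq hp.1
  choose L hLin hLext hLrev using fun i => exists_linearExtension_reversing (hS i)
  refine ⟨L, hLin, fun x y => ⟨fun hxy i => hLext i x y hxy, fun hL => ?_⟩⟩
  by_contra hxy
  obtain ⟨i, hxi, hyi⟩ := hI x y hxy
  exact hLrev i (x, y) ⟨hxi, hyi⟩ (hL i)

theorem orderDim_le_mk {ι : Type u} {L : ι → P → P → Prop} (hL : IsRealizer P L) :
    orderDim P ≤ #ι :=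
  csInf_le' ⟨ι, L, rfl, hL⟩

end Realizer

def AlmostDisjoint {D α : Type u} (θ : Cardinal.{u}) (f g : D → α) : Prop :=
  #{δ | f δ = g δ} < θ

theorem AlmostDisjoint.symm {D α : Type u} {θ : Cardinal.{u}} {f g : D → α}
    (h : AlmostDisjoint θ f g) : AlmostDisjoint θ g f := by
  simpa only [AlmostDisjoint, eq_comm] using h

section AlmostDisjoint

-- A cofinal `s ⊆ κ` of order type `cf κ` serves as the domain `cf κ` of the functions.
variable {κ : Cardinal.{u}} {s : Set κ.ord.ToType}

theorem mk_eq_cof_of_type_eq (hst : typeLT s = κ.ord.cof.ord) : #s = κ.ord.cof := by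
  simpa using congrArg card hst

theorem exists_almostDisjoint_of_mk_le
    (hκ : ℵ₀ ≤ κ) (hs : IsCofinal s) (hst : typeLT s = κ.ord.cof.ord)
    {ι : Type u} (hι : #ι ≤ κ) (F : ι → s → κ.ord.ToType) :
    ∃ g : s → κ.ord.ToType, ∀ i, AlmostDisjoint κ.ord.cof g (F i) := by
  obtain ⟨e⟩ : Nonempty (ι ↪ κ.ord.ToType) := by rwa [← Cardinal.le_def, mk_toType, card_ord]
  have hfresh : ∀ δ : s, ((fun i => F i δ) '' {i | e i ≤ δ})ᶜ.Nonempty := fun δ =>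
    compl_nonempty_of_mk_lt_mk <| mk_image_le.trans_lt <|
      (mk_preimage_of_injective _ (Iic (δ : κ.ord.ToType)) e.injective).trans_lt
        (mk_Iic_lt _ (by simp) (by simpa using hκ))
  -- At `δ` only the fewer than κ functions `F i` with `e i ≤ δ` are avoided, so `g` can agree
  -- with `F i` only below the first point of `s` above `e i`.
  choose g hg using hfresh
  refine ⟨g, fun i => ?_⟩
  obtain ⟨d, hd, hid⟩ := hs (e i)
  have hsub : {δ | g δ = F i δ} ⊆ Iio ⟨d, hd⟩ := fun δ hδ => by
    by_contra hlt
    have hle : (⟨d, hd⟩ : s) ≤ δ := not_lt.1 hlt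
    exact hg δ ⟨i, hid.trans hle, hδ.symm⟩
  calc #{δ | g δ = F i δ} ≤ #(Iio (⟨d, hd⟩ : s)) := mk_le_mk_of_subset hsub
    _ < #s := mk_Iio_lt _ (by rw [mk_eq_cof_of_type_eq hst, hst])
    _ = κ.ord.cof := mk_eq_cof_of_type_eq hst

theorem exists_pairwise_almostDisjoint
    (hκ : ℵ₀ ≤ κ) (hs : IsCofinal s) (hst : typeLT s = κ.ord.cof.ord) :
    ∃ G : (Order.succ κ).ord.ToType → s → κ.ord.ToType,
      Pairwise fun w w' => AlmostDisjoint κ.ord.cof (G w) (G w') := by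
  have hIio : ∀ w : (Order.succ κ).ord.ToType, #(Iio w) ≤ κ := fun w =>
    Order.lt_succ_iff.1 (by simpa using mk_Iio_lt w (by simp))
  choose next hnext using fun w => exists_almostDisjoint_of_mk_le hκ hs hst (hIio w)
  let G : (Order.succ κ).ord.ToType → s → κ.ord.ToType :=
    wellFounded_lt.fix fun w rec => next w fun w' => rec w'.1 w'.2
  have hG : ∀ w, G w = next w fun w' => G w'.1 := wellFounded_lt.fix_eq _
  have hlt : ∀ ⦃w w'⦄, w' < w → AlmostDisjoint κ.ord.cof (G w) (G w') := fun w w' h => by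
    rw [hG w]
    exact hnext w _ ⟨w', h⟩
  exact ⟨G, fun w w' hne => hne.lt_or_gt.elim (fun h => (hlt h).symm) (fun h => hlt h)⟩

theorem exists_separating_family (hκ : ℵ₀ ≤ κ) (X : Type u) (hX : #X ≤ Order.succ κ) :
    ∃ K : Type u, #K ≤ κ ∧ ∃ I : X → Set K,
      ∀ x (C : Set X), #C < κ.ord.cof → x ∉ C → ∃ i ∈ I x, ∀ y ∈ C, i ∉ I y := by
  obtain ⟨s, hs, hst⟩ := exists_ord_cof_eq κ.ord.ToType
  rw [cof_toType] at hst
  obtain ⟨G, hG⟩ := exists_pairwise_almostDisjoint hκ hs hst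
  obtain ⟨e⟩ : Nonempty (X ↪ (Order.succ κ).ord.ToType) := by
    rwa [← Cardinal.le_def, mk_toType, card_ord]
  refine ⟨s × κ.ord.ToType, ?_, fun x => {p | p.2 = G (e x) p.1}, fun x C hC hxC => ?_⟩
  · rw [mk_prod, Cardinal.lift_id, Cardinal.lift_id, mk_eq_cof_of_type_eq hst, mk_toType, card_ord]
    exact (mul_le_mul_left (cof_ord_le κ) κ).trans (mul_eq_self hκ).le
  let U := ⋃ y : C, {δ | G (e x) δ = G (e y) δ}
  have hU : #U < #s := by
    rw [mk_eq_cof_of_type_eq hst, card_iUnion_lt_iff_forall_of_isRegular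
      (isRegular_cof (isSuccLimit_ord hκ)) hC]
    exact fun y => hG fun h => hxC (e.injective h ▸ y.2)
  obtain ⟨δ, hδ⟩ := compl_nonempty_of_mk_lt_mk hU
  exact ⟨(δ, G (e x) δ), rfl, fun y hy hmem => hδ (mem_iUnion.2 ⟨⟨y, hy⟩, hmem⟩)⟩

end AlmostDisjoint

/-- A locally countable partial order of size κ⁺, for κ of uncountable
cofinality, has order dimension at most κ. -/
theorem stmt15 (κ : Cardinal.{u}) (hcf : ℵ₀ < κ.ord.cof)
    {P : Type u} [PartialOrder P] (hP : #P = Order.succ κ)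
    (hloc : ∀ x : P, {y : P | y ≤ x}.Countable) :
    orderDim P ≤ κ := by
  obtain ⟨K, hK, I, hI⟩ := exists_separating_family (hcf.le.trans (cof_ord_le κ)) P hP.le
  obtain ⟨L, hL⟩ := exists_isRealizer_of_separating I fun x y hxy =>
    hI x {z | z ≤ y} ((le_aleph0_iff_set_countable.2 (hloc y)).trans_lt hcf) hxy
  exact (orderDim_le_mk hL).trans hK
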